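/- If Ti is a subtree of T0 and x ∈ Ωi, then u0(x) = ui(x); that is, the controller of subtree i is the one executed by the root whenever the state is in the operating region of subtree i. -/
import Mathlib


/-- Return status of a behavior tree: Running, Success, or Failure. -/
inductive BTStatus where
  | Run | Succ | Fail
deriving DecidableEq

/-- Direction to a child in a binary interior node. -/
inductive BTDir where
  | left | right
deriving DecidableEq

/-- Behavior trees: leaves carry a controller `u : X → U` and a return-status
function `r : X → {R, S, F}`; interior nodes are binary Sequence and Fallback. -/
inductive BTree (X U : Type*) where
  | leaf (u : X → U) (r : X → BTStatus)
  | seq (t1 t2 : BTree X U)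
  | fall (t1 t2 : BTree X U)

namespace BTree
variable {X U : Type*}

/-- Return-status function of a tree (Sequence: run second child iff first
succeeds; Fallback: run second child iff first fails). -/
def ret : BTree X U → X → BTStatus
  | .leaf _ r, x => r x
  | .seq t1 t2, x => if t1.ret x = .Succ then t2.ret x else t1.ret x
  | .fall t1 t2, x => if t1.ret x = .Fail then t2.ret x else t1.ret x

/-- Controller of a tree. -/
def ctrl : BTree X U → X → U
  | .leaf u _, x => u x
  | .seq t1 t2, x => if t1.ret x = .Succ then t2.ctrl x else t1.ctrl x
  | .fall t1 t2, x => if t1.ret x = .Fail then t2.ctrl x else t1.ctrl x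

/-- Success region. -/
def Sreg (t : BTree X U) : Set X := {x | t.ret x = .Succ}
/-- Failure region. -/
def Freg (t : BTree X U) : Set X := {x | t.ret x = .Fail}
/-- Running region. -/
def Rreg (t : BTree X U) : Set X := {x | t.ret x = .Run}

/-- The subtree at a given path (if the path is valid). -/
def sub : BTree X U → List BTDir → Option (BTree X U)
  | t, [] => some t
  | .leaf _ _, _ :: _ => none
  | .seq t1 _, .left :: p => t1.sub p
  | .seq _ t2, .right :: p => t2.sub p
  | .fall t1 _, .left :: p => t1.sub p
  | .fall _ t2, .right :: p => t2.sub p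

/-- Influence region of the subtree at a path, given the influence region `I0`
of the root: the leftmost child inherits its parent's influence region; a right
child of a Sequence (resp. Fallback) gets its left sibling's influence region
intersected with the sibling's success (resp. failure) region. -/
def infl : BTree X U → Set X → List BTDir → Set X
  | _, I0, [] => I0
  | .leaf _ _, I0, _ :: _ => I0
  | .seq t1 _, I0, .left :: p => t1.infl I0 p
  | .seq t1 t2, I0, .right :: p => t2.infl (I0 ∩ t1.Sreg) p
  | .fall t1 _, I0, .left :: p => t1.infl I0 p
  | .fall t1 t2, I0, .right :: p => t2.infl (I0 ∩ t1.Freg) p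

/-- Operating region `Ωᵢ = Iᵢ ∩ Rᵢ` of the subtree at a path (root influence
region `I0 = X`); empty for an invalid path. -/
def opReg (t : BTree X U) (p : List BTDir) : Set X :=
  match t.sub p with
  | some s => t.infl Set.univ p ∩ s.Rreg
  | none => ∅

/-- Paths to all the leaves of a tree. -/
def leafPaths : BTree X U → List (List BTDir)
  | .leaf _ _ => [[]]
  | .seq t1 t2 => t1.leafPaths.map (.left :: ·) ++ t2.leafPaths.map (.right :: ·)
  | .fall t1 t2 => t1.leafPaths.map (.left :: ·) ++ t2.leafPaths.map (.right :: ·)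

end BTree

lemma BTree.infl_subset {X U : Type*} (t : BTree X U) (I : Set X) (p : List BTDir) :
    t.infl I p ⊆ I := by
  induction t generalizing I p with
  | leaf u r => cases p <;> simp [BTree.infl]
  | seq t1 t2 ih1 ih2 =>
      cases p with
      | nil => simp [BTree.infl]
      | cons d p =>
          cases d
          · exact ih1 I p
          · exact (ih2 _ p).trans Set.inter_subset_left
  | fall t1 t2 ih1 ih2 =>
      cases p with
      | nil => simp [BTree.infl]
      | cons d p =>
          cases d
          · exact ih1 I p
          · exact (ih2 _ p).trans Set.inter_subset_left

lemma BTree.main_aux {X U : Type*} (t ti : BTree X U) (p : List BTDir) (I : Set X)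
    (x : X) (hsub : t.sub p = some ti) (hI : x ∈ t.infl I p) (hR : ti.ret x = .Run) :
    t.ctrl x = ti.ctrl x ∧ t.ret x = .Run := by
  induction t generalizing I p ti with
  | leaf u r =>
      cases p with
      | nil =>
          simp only [BTree.sub, Option.some.injEq] at hsub
          subst hsub; exact ⟨rfl, hR⟩
      | cons d p => simp [BTree.sub] at hsub
  | seq t1 t2 ih1 ih2 =>
      cases p with
      | nil =>
          simp only [BTree.sub, Option.some.injEq] at hsub
          subst hsub; exact ⟨rfl, hR⟩
      | cons d p =>
          cases d with
          | left =>
              obtain ⟨h1, h2⟩ := ih1 ti p I hsub hI hR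
              simp [BTree.ctrl, BTree.ret, h1, h2]
          | right =>
              have hS : x ∈ t1.Sreg := (BTree.infl_subset t2 _ p hI).2
              obtain ⟨h1, h2⟩ := ih2 ti p _ hsub hI hR
              simp only [BTree.Sreg, Set.mem_setOf_eq] at hS
              simp [BTree.ctrl, BTree.ret, hS, h1, h2]
  | fall t1 t2 ih1 ih2 =>
      cases p with
      | nil =>
          simp only [BTree.sub, Option.some.injEq] at hsub
          subst hsub; exact ⟨rfl, hR⟩
      | cons d p =>
          cases d with
          | left =>
              obtain ⟨h1, h2⟩ := ih1 ti p I hsub hI hR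
              simp [BTree.ctrl, BTree.ret, h1, h2]
          | right =>
              have hF : x ∈ t1.Freg := (BTree.infl_subset t2 _ p hI).2
              obtain ⟨h1, h2⟩ := ih2 ti p _ hsub hI hR
              simp only [BTree.Freg, Set.mem_setOf_eq] at hF
              simp [BTree.ctrl, BTree.ret, hF, h1, h2]

/-- if `Ti` is the subtree of `T0` at path `p` and `x ∈ Ωi`, then
`u0(x) = ui(x)`: the root executes the controller of subtree `i` whenever the
state is in the operating region of subtree `i`. -/
theorem root_ctrl_eq_subtree_ctrl {X U : Type*} (t0 ti : BTree X U)
    (p : List BTDir) (hsub : t0.sub p = some ti) (x : X) (hx : x ∈ t0.opReg p) :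
    t0.ctrl x = ti.ctrl x := by
  unfold BTree.opReg at hx
  rw [hsub] at hx
  exact (BTree.main_aux t0 ti p Set.univ x hsub hx.1 hx.2).1
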